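/- For any k ≥ 1, Λ(2^k) = 2^{k−1}·(k + 2). -/

import Mathlib

/-- `U` induces a disjoint union of chains such that any two elements belonging to different
chains are incomparable; equivalently, comparability restricted to `U` is transitive
(so the comparability graph induced on `U` is a vertex-disjoint union of cliques). -/
def IsChainUnion {α : Type*} [PartialOrder α] (U : Finset α) : Prop :=
  ∀ x ∈ U, ∀ y ∈ U, ∀ z ∈ U,
    (x ≤ y ∨ y ≤ x) → (y ≤ z ∨ z ≤ y) → (x ≤ z ∨ z ≤ x)

/-- `ao α`: the maximum cardinality of a subset of the finite poset `α` that is a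
disjoint union of chains with elements of different chains incomparable. -/
noncomputable def ao (α : Type*) [Fintype α] [PartialOrder α] : ℕ :=
  sSup {m | ∃ U : Finset α, IsChainUnion U ∧ U.card = m}

/-- The height of a finite poset: the maximum size of a chain. -/
noncomputable def heightP (α : Type*) [Fintype α] [PartialOrder α] : ℕ :=
  sSup {m | ∃ C : Finset α, IsChain (· ≤ ·) (↑C : Set α) ∧ C.card = m}

/-- The width of a finite poset: the maximum size of an antichain. -/
noncomputable def widthP (α : Type*) [Fintype α] [PartialOrder α] : ℕ :=
  sSup {m | ∃ A : Finset α, IsAntichain (· ≤ ·) (↑A : Set α) ∧ A.card = m}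

/-- The cover graph of a poset: `x` and `y` are adjacent iff one covers the other. -/
def coverGraph (α : Type*) [PartialOrder α] : SimpleGraph α where
  Adj x y := x ⋖ y ∨ y ⋖ x
  symm := ⟨fun x y h => h.symm⟩
  loopless := ⟨fun x h => by rcases h with h | h <;> exact absurd h.lt (lt_irrefl x)⟩

/-- A poset is acyclic if its cover graph has no cycles. -/
def AcyclicPoset (α : Type*) [PartialOrder α] : Prop := (coverGraph α).IsAcyclic

/-- A poset is connected if its cover graph is connected. -/
def ConnectedPoset (α : Type*) [PartialOrder α] : Prop := (coverGraph α).Connected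

/-- A poset is `N`-free if there are no `p1, p2, p3, p4` with `p1 > p3`, `p1 > p4`, `p2 > p4`,
`p1 ∦ p2`, `p2 ∦ p3`, `p3 ∦ p4`. -/
def NFree (α : Type*) [PartialOrder α] : Prop :=
  ¬ ∃ p1 p2 p3 p4 : α, p3 < p1 ∧ p4 < p1 ∧ p4 < p2 ∧
      ¬(p1 ≤ p2 ∨ p2 ≤ p1) ∧ ¬(p2 ≤ p3 ∨ p3 ≤ p2) ∧ ¬(p3 ≤ p4 ∨ p4 ≤ p3)

/-- A poset is `V`-free if there are no `p1 < p2`, `p1 < p3` with `p2` incomparable to `p3`. -/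
def VFree (α : Type*) [PartialOrder α] : Prop :=
  ¬ ∃ p1 p2 p3 : α, p1 < p2 ∧ p1 < p3 ∧ ¬(p2 ≤ p3 ∨ p3 ≤ p2)

/-- `ao` of the family `T_n` of all acyclic posets on `n` elements:
the minimum of `ao P` over acyclic posets `P` of size `n`. -/
noncomputable def aoT (n : ℕ) : ℕ :=
  sInf {m | ∃ P : PartialOrder (Fin n),
    @AcyclicPoset (Fin n) P ∧ @ao (Fin n) (Fin.fintype n) P = m}

/-- `Λ(a, h)`: the maximum cardinality of a `V`-free poset `P` with `ao P = a` and
height at most `h`. -/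
noncomputable def Lam (a h : ℕ) : ℕ :=
  sSup {n | ∃ P : PartialOrder (Fin n), @VFree (Fin n) P ∧
    @ao (Fin n) (Fin.fintype n) P = a ∧ @heightP (Fin n) (Fin.fintype n) P ≤ h}

/-- `Λ(a) = Λ(a, a)`. -/
noncomputable def Lambda (a : ℕ) : ℕ := Lam a a

/-- `X(a)`: the maximum cardinality of an acyclic and `N`-free poset `P` with `ao P = a`. -/
noncomputable def Xmax (a : ℕ) : ℕ :=
  sSup {n | ∃ P : PartialOrder (Fin n), @AcyclicPoset (Fin n) P ∧
    @NFree (Fin n) P ∧ @ao (Fin n) (Fin.fintype n) P = a}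

/-!
Up-sets in a `V`-free poset are chains, so the down-set of a maximal element is incomparable to
the rest. Hence a `V`-free poset either has a greatest element, whose removal lowers the height,
or splits into two mutually incomparable parts whose `ao` add up. With
`φ(a) = a log₂ a / 2`, which satisfies `φ x + φ y + x ≤ φ (x + y)` for `x ≤ y`, induction gives
`|P| ≤ h(P) + φ(ao P)`, i.e. `|P| ≤ 2^k + k 2^(k-1)` when `ao P = 2^k` and `h(P) ≤ 2^k`.
Equality is attained by `T₀` a point and `T_{k+1} = (T_k ⊔ T_k) ⊕ C_{2^k}` (two disjoint
copies of `T_k` below a chain of length `2^k`), for which `ao` and the height both equal `2^k`.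
-/

open Finset

section Phi

noncomputable def phi (a : ℕ) : ℝ := a * Real.logb 2 a / 2

lemma phi_nonneg (a : ℕ) : 0 ≤ phi a := by
  rcases a.eq_zero_or_pos with rfl | ha
  · simp [phi]
  · have : 0 ≤ Real.logb 2 a := Real.logb_nonneg one_lt_two (by exact_mod_cast ha)
    unfold phi
    positivity

lemma phi_mono : Monotone phi := by
  intro m n hmn
  rcases m.eq_zero_or_pos with rfl | hm
  · simpa [phi] using phi_nonneg n
  have hm' : (1 : ℝ) ≤ m := by exact_mod_cast hm
  have hmn' : (m : ℝ) ≤ n := by exact_mod_cast hmn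
  have hlog : Real.logb 2 m ≤ Real.logb 2 n :=
    Real.logb_le_logb_of_le one_lt_two (by positivity) hmn'
  unfold phi
  gcongr
  exact Real.logb_nonneg one_lt_two hm'

lemma mul_logb_add_mul_logb_add_le {x y : ℝ} (hx : 0 < x) (hxy : x ≤ y) :
    x * Real.logb 2 x + y * Real.logb 2 y + 2 * x ≤ (x + y) * Real.logb 2 (x + y) := by
  have hy : 0 < y := hx.trans_le hxy
  have hx' : 1 ≤ Real.logb 2 ((x + y) / x) := by
    rw [Real.le_logb_iff_rpow_le one_lt_two (by positivity), Real.rpow_one, le_div_iff₀ hx]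
    linarith
  -- Bernoulli's inequality `2 ^ t ≤ 1 + t` for `t ∈ [0, 1]`
  have hy' : x / y ≤ Real.logb 2 ((x + y) / y) := by
    rw [Real.le_logb_iff_rpow_le one_lt_two (by positivity)]
    calc (2 : ℝ) ^ (x / y) = (1 + 1) ^ (x / y) := by norm_num
      _ ≤ 1 + x / y * 1 :=
        rpow_one_add_le_one_add_mul_self (by norm_num) (by positivity) ((div_le_one hy).2 hxy)
      _ = (x + y) / y := by field_simp; ring
  rw [Real.logb_div (by positivity) hx.ne'] at hx'
  rw [Real.logb_div (by positivity) hy.ne'] at hy'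
  have := mul_le_mul_of_nonneg_left hx' hx.le
  have := mul_le_mul_of_nonneg_left hy' hy.le
  rw [mul_div_cancel₀ x hy.ne'] at this
  nlinarith

lemma phi_add_add_le {x y : ℕ} (hxy : x ≤ y) : phi x + phi y + x ≤ phi (x + y) := by
  rcases x.eq_zero_or_pos with rfl | hx
  · simp [phi]
  have := mul_logb_add_mul_logb_add_le (x := x) (y := y) (by positivity) (by exact_mod_cast hxy)
  simp only [phi]
  push_cast
  linarith

lemma phi_two_pow (k : ℕ) : phi (2 ^ k) = k * 2 ^ k / 2 := by
  simp only [phi]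
  push_cast
  rw [Real.logb_pow, Real.logb_self_eq_one one_lt_two]
  ring

end Phi

section Order

variable {α β : Type*} [PartialOrder α] [PartialOrder β]

theorem vFree_iff : VFree α ↔ ∀ ⦃p q r : α⦄, p ≤ q → p ≤ r → q ≤ r ∨ r ≤ q := by
  refine ⟨fun hV p q r hq hr => ?_, fun h ⟨p, q, r, hq, hr, hqr⟩ => hqr (h hq.le hr.le)⟩
  by_contra hqr
  rcases hq.lt_or_eq with hq | rfl
  · rcases hr.lt_or_eq with hr | rfl
    · exact hV ⟨p, q, r, hq, hr, hqr⟩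
    · exact hqr (Or.inr hq.le)
  · exact hqr (Or.inl hr)

theorem VFree.comap (f : α ↪o β) (hV : VFree β) : VFree α := by
  rw [vFree_iff] at hV ⊢
  intro p q r hq hr
  simpa only [f.le_iff_le] using hV (f.monotone hq) (f.monotone hr)

theorem IsChain.isChainUnion {C : Finset α} (hC : IsChain (· ≤ ·) (C : Set α)) :
    IsChainUnion C :=
  fun _ hx _ _ _ hz _ _ => hC.total hx hz

theorem IsChainUnion.comap (f : α ↪o β) {U : Finset β} {V : Finset α} (hU : IsChainUnion U)
    (hV : ∀ x ∈ V, f x ∈ U) : IsChainUnion V := by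
  intro x hx y hy z hz hxy hyz
  simpa only [f.le_iff_le] using hU _ (hV x hx) _ (hV y hy) _ (hV z hz)
    (by simpa only [f.le_iff_le] using hxy) (by simpa only [f.le_iff_le] using hyz)

theorem IsChainUnion.map (f : α ↪o β) {U : Finset α} (hU : IsChainUnion U) :
    IsChainUnion (U.map f.toEmbedding) := by
  simpa [IsChainUnion, f.le_iff_le] using hU

theorem IsChain.comap (f : α ↪o β) {C : Finset β} {D : Finset α}
    (hC : IsChain (· ≤ ·) (C : Set β)) (hD : ∀ x ∈ D, f x ∈ C) :
    IsChain (· ≤ ·) (D : Set α) :=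
  (hC.preimage _ _ f f.injective fun _ _ => f.le_iff_le.1).mono fun x hx => hD x hx

theorem IsChainUnion.union [DecidableEq α] {U V : Finset α} (hU : IsChainUnion U)
    (hV : IsChainUnion V) (hUV : ∀ x ∈ U, ∀ y ∈ V, ¬(x ≤ y ∨ y ≤ x)) : IsChainUnion (U ∪ V) := by
  have hVU : ∀ y ∈ V, ∀ x ∈ U, ¬(y ≤ x ∨ x ≤ y) := fun y hy x hx h => hUV x hx y hy h.symm
  intro x hx y hy z hz hxy hyz
  rw [mem_union] at hx hy hz
  rcases hy with hy | hy
  · have hx : x ∈ U := hx.resolve_right fun hx => hVU x hx y hy hxy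
    have hz : z ∈ U := hz.resolve_right fun hz => hVU z hz y hy hyz.symm
    exact hU x hx y hy z hz hxy hyz
  · have hx : x ∈ V := hx.resolve_left fun hx => hUV x hx y hy hxy
    have hz : z ∈ V := hz.resolve_left fun hz => hUV z hz y hy hyz.symm
    exact hV x hx y hy z hz hxy hyz

theorem VFree.not_comparable_of_maximal (hV : VFree α) {S : Finset α} {m a b : α}
    (hm : Maximal (· ∈ S) m) (ha : a ∈ S) (ham : ¬a ≤ m) (hbm : b ≤ m) :
    ¬(a ≤ b ∨ b ≤ a) := by
  rintro (hab | hba)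
  · exact ham (hab.trans hbm)
  · rcases vFree_iff.1 hV hba hbm with ham' | hma
    · exact ham ham'
    · exact ham (hm.2 ha hma)

end Order

section OnFinset

variable {α : Type*} [PartialOrder α]

open Classical in
noncomputable def aoOn (S : Finset α) : ℕ := (S.powerset.filter IsChainUnion).sup card

open Classical in
noncomputable def heightOn (S : Finset α) : ℕ :=
  (S.powerset.filter fun C : Finset α => IsChain (· ≤ ·) (C : Set α)).sup card

open Classical in
theorem card_le_aoOn {S U : Finset α} (hUS : U ⊆ S) (hU : IsChainUnion U) : U.card ≤ aoOn S :=
  le_sup (f := card) (mem_filter.2 ⟨mem_powerset.2 hUS, hU⟩)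

open Classical in
theorem card_le_heightOn {S C : Finset α} (hCS : C ⊆ S) (hC : IsChain (· ≤ ·) (C : Set α)) :
    C.card ≤ heightOn S :=
  le_sup (f := card) (mem_filter.2 ⟨mem_powerset.2 hCS, hC⟩)

open Classical in
theorem exists_aoOn (S : Finset α) : ∃ U ⊆ S, IsChainUnion U ∧ U.card = aoOn S := by
  obtain ⟨U, hU, hcard⟩ :=
    exists_mem_eq_sup (S.powerset.filter IsChainUnion)
      ⟨∅, mem_filter.2 ⟨empty_mem_powerset S, by simp [IsChainUnion]⟩⟩ card
  simp only [mem_filter, mem_powerset] at hU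
  exact ⟨U, hU.1, hU.2, hcard.symm⟩

open Classical in
theorem exists_heightOn (S : Finset α) :
    ∃ C ⊆ S, IsChain (· ≤ ·) (C : Set α) ∧ C.card = heightOn S := by
  obtain ⟨C, hC, hcard⟩ := exists_mem_eq_sup
    (S.powerset.filter fun C : Finset α => IsChain (· ≤ ·) (C : Set α)) ⟨∅, by simp⟩ card
  simp only [mem_filter, mem_powerset] at hC
  exact ⟨C, hC.1, hC.2, hcard.symm⟩

theorem aoOn_mono {S T : Finset α} (h : S ⊆ T) : aoOn S ≤ aoOn T := by
  obtain ⟨U, hUS, hU, hcard⟩ := exists_aoOn S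
  exact hcard ▸ card_le_aoOn (hUS.trans h) hU

theorem heightOn_mono {S T : Finset α} (h : S ⊆ T) : heightOn S ≤ heightOn T := by
  obtain ⟨C, hCS, hC, hcard⟩ := exists_heightOn S
  exact hcard ▸ card_le_heightOn (hCS.trans h) hC

theorem heightOn_le_aoOn (S : Finset α) : heightOn S ≤ aoOn S := by
  obtain ⟨C, hCS, hC, hcard⟩ := exists_heightOn S
  exact hcard ▸ card_le_aoOn hCS hC.isChainUnion

theorem aoOn_add_aoOn_le [DecidableEq α] {A B : Finset α}
    (hAB : ∀ x ∈ A, ∀ y ∈ B, ¬(x ≤ y ∨ y ≤ x)) : aoOn A + aoOn B ≤ aoOn (A ∪ B) := by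
  obtain ⟨U, hUA, hU, hUcard⟩ := exists_aoOn A
  obtain ⟨V, hVB, hV, hVcard⟩ := exists_aoOn B
  have hUV : ∀ x ∈ U, ∀ y ∈ V, ¬(x ≤ y ∨ y ≤ x) := fun x hx y hy => hAB x (hUA hx) y (hVB hy)
  have hdisj : Disjoint U V :=
    disjoint_left.2 fun x hxU hxV => hUV x hxU x hxV (Or.inl le_rfl)
  rw [← hUcard, ← hVcard, ← card_union_of_disjoint hdisj]
  exact card_le_aoOn (union_subset_union hUA hVB) (hU.union hV hUV)

theorem heightOn_erase_add_one_le [DecidableEq α] {S : Finset α} {r : α} (hr : r ∈ S)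
    (hle : ∀ x ∈ S, x ≤ r) : heightOn (S.erase r) + 1 ≤ heightOn S := by
  obtain ⟨C, hCS, hC, hcard⟩ := exists_heightOn (S.erase r)
  have hrC : r ∉ C := fun h => notMem_erase r S (hCS h)
  have hC' : IsChain (· ≤ ·) ((insert r C : Finset α) : Set α) := by
    rw [coe_insert]
    exact hC.insert fun b hb _ => Or.inr (hle b (mem_of_mem_erase (hCS hb)))
  have := card_le_heightOn (insert_subset hr (hCS.trans (erase_subset r S))) hC'
  rwa [card_insert_of_notMem hrC, hcard] at this

theorem card_union_le_of_incomparable [DecidableEq α] {A B : Finset α}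
    (hAB : ∀ x ∈ A, ∀ y ∈ B, ¬(x ≤ y ∨ y ≤ x))
    (hA : (A.card : ℝ) ≤ heightOn A + phi (aoOn A))
    (hB : (B.card : ℝ) ≤ heightOn B + phi (aoOn B)) :
    ((A ∪ B).card : ℝ) ≤ heightOn (A ∪ B) + phi (aoOn (A ∪ B)) := by
  wlog hle : aoOn A ≤ aoOn B generalizing A B
  · rw [union_comm]
    exact this (fun y hy x hx h => hAB x hx y hy h.symm) hB hA (le_of_not_ge hle)
  have hdisj : Disjoint A B := disjoint_left.2 fun x hxA hxB => hAB x hxA x hxB (Or.inl le_rfl)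
  have hphi := (phi_add_add_le hle).trans (phi_mono (aoOn_add_aoOn_le hAB))
  have hA' : (heightOn A : ℝ) ≤ aoOn A := by exact_mod_cast heightOn_le_aoOn A
  have hB' : (heightOn B : ℝ) ≤ heightOn (A ∪ B) := by
    exact_mod_cast heightOn_mono subset_union_right
  rw [card_union_of_disjoint hdisj]
  push_cast
  linarith

theorem VFree.card_le_heightOn_add_phi_aoOn (hV : VFree α) (S : Finset α) :
    (S.card : ℝ) ≤ heightOn S + phi (aoOn S) := by
  classical
  induction S using Finset.strongInduction with
  | H S ih =>
  rcases S.eq_empty_or_nonempty with rfl | hS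
  · rw [card_empty, Nat.cast_zero]
    exact add_nonneg (Nat.cast_nonneg _) (phi_nonneg _)
  obtain ⟨r, hr⟩ := S.exists_maximal hS
  by_cases hle : ∀ x ∈ S, x ≤ r
  · have hS' := ih _ (erase_ssubset hr.1)
    have hheight : (heightOn (S.erase r) : ℝ) + 1 ≤ heightOn S := by
      exact_mod_cast heightOn_erase_add_one_le hr.1 hle
    have hao := phi_mono (aoOn_mono (erase_subset r S))
    rw [← card_erase_add_one hr.1]
    push_cast
    linarith
  · push Not at hle
    obtain ⟨x, hxS, hxr⟩ := hle
    obtain ⟨m, hxm, hm⟩ := S.exists_le_maximal hxS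
    have hrm : ¬r ≤ m := fun h => hxr (hxm.trans (hr.2 hm.1 h))
    set A := {a ∈ S | ¬a ≤ m}
    set B := {a ∈ S | a ≤ m}
    have hunion : A ∪ B = S := by rw [union_comm, filter_union_filter_not_eq]
    have hAB : ∀ a ∈ A, ∀ b ∈ B, ¬(a ≤ b ∨ b ≤ a) := by
      intro a ha b hb
      rw [mem_filter] at ha hb
      exact hV.not_comparable_of_maximal hm ha.1 ha.2 hb.2
    have hA := ih A (filter_ssubset.2 ⟨m, hm.1, not_not.2 le_rfl⟩)
    have hB := ih B (filter_ssubset.2 ⟨r, hr.1, hrm⟩)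
    simpa only [hunion] using card_union_le_of_incomparable hAB hA hB

end OnFinset

section Fintype

variable {α β : Type*} [Fintype α] [PartialOrder α] [Fintype β] [PartialOrder β]

theorem ao_eq_aoOn_univ : ao α = aoOn (univ : Finset α) := by
  refine IsGreatest.csSup_eq ⟨?_, ?_⟩
  · obtain ⟨U, -, hU, hcard⟩ := exists_aoOn (univ : Finset α)
    exact ⟨U, hU, hcard⟩
  · rintro _ ⟨U, hU, rfl⟩
    exact card_le_aoOn (subset_univ U) hU

theorem heightP_eq_heightOn_univ : heightP α = heightOn (univ : Finset α) := by
  refine IsGreatest.csSup_eq ⟨?_, ?_⟩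
  · obtain ⟨C, -, hC, hcard⟩ := exists_heightOn (univ : Finset α)
    exact ⟨C, hC, hcard⟩
  · rintro _ ⟨C, hC, rfl⟩
    exact card_le_heightOn (subset_univ C) hC

theorem card_le_ao {U : Finset α} (hU : IsChainUnion U) : U.card ≤ ao α :=
  ao_eq_aoOn_univ (α := α) ▸ card_le_aoOn (subset_univ U) hU

theorem card_le_heightP {C : Finset α} (hC : IsChain (· ≤ ·) (C : Set α)) :
    C.card ≤ heightP α :=
  heightP_eq_heightOn_univ (α := α) ▸ card_le_heightOn (subset_univ C) hC

variable (α) in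
theorem exists_ao : ∃ U : Finset α, IsChainUnion U ∧ U.card = ao α := by
  obtain ⟨U, -, hU, hcard⟩ := exists_aoOn (univ : Finset α)
  exact ⟨U, hU, hcard.trans ao_eq_aoOn_univ.symm⟩

variable (α) in
theorem exists_heightP : ∃ C : Finset α, IsChain (· ≤ ·) (C : Set α) ∧ C.card = heightP α := by
  obtain ⟨C, -, hC, hcard⟩ := exists_heightOn (univ : Finset α)
  exact ⟨C, hC, hcard.trans heightP_eq_heightOn_univ.symm⟩

theorem heightP_le_ao : heightP α ≤ ao α := by
  rw [ao_eq_aoOn_univ, heightP_eq_heightOn_univ]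
  exact heightOn_le_aoOn univ

theorem ao_le_card : ao α ≤ Fintype.card α := by
  obtain ⟨U, -, hcard⟩ := exists_ao α
  exact hcard ▸ card_le_univ U

theorem VFree.card_le_heightP_add_phi_ao (hV : VFree α) :
    (Fintype.card α : ℝ) ≤ heightP α + phi (ao α) := by
  simpa [ao_eq_aoOn_univ, heightP_eq_heightOn_univ] using hV.card_le_heightOn_add_phi_aoOn univ

theorem ao_le_of_orderEmbedding (f : α ↪o β) : ao α ≤ ao β := by
  obtain ⟨U, hU, hcard⟩ := exists_ao α
  simpa [hcard] using card_le_ao (hU.map f)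

theorem heightP_le_of_orderEmbedding (f : α ↪o β) : heightP α ≤ heightP β := by
  obtain ⟨C, hC, hcard⟩ := exists_heightP α
  have hC' : IsChain (· ≤ ·) ((C.map f.toEmbedding : Finset β) : Set β) := by
    rw [coe_map]
    exact hC.image f
  simpa [hcard] using card_le_heightP hC'

theorem ao_congr (e : α ≃o β) : ao α = ao β :=
  (ao_le_of_orderEmbedding e.toOrderEmbedding).antisymm
    (ao_le_of_orderEmbedding e.symm.toOrderEmbedding)

theorem heightP_congr (e : α ≃o β) : heightP α = heightP β :=
  (heightP_le_of_orderEmbedding e.toOrderEmbedding).antisymm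
    (heightP_le_of_orderEmbedding e.symm.toOrderEmbedding)

theorem VFree.exists_partialOrder_fin (hV : VFree α) {n : ℕ} (hn : Fintype.card α = n) :
    ∃ P : PartialOrder (Fin n), @VFree _ P ∧ @ao _ _ P = ao α ∧ @heightP _ _ P = heightP α := by
  let e := (Fintype.equivFinOfCardEq hn).symm
  let P : PartialOrder (Fin n) := PartialOrder.lift e e.injective
  let f : @OrderIso (Fin n) α P.toLE _ := @RelIso.mk _ _ (@LE.le _ P.toLE) (· ≤ ·) e Iff.rfl
  exact ⟨P, @VFree.comap _ _ P _ (@OrderIso.toOrderEmbedding _ _ P.toLE _ f) hV,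
    @ao_congr _ _ _ P _ _ f, @heightP_congr _ _ _ P _ _ f⟩

end Fintype

section Sum

variable {α β : Type*} [PartialOrder α] [PartialOrder β]

def OrderEmbedding.sumInl : α ↪o α ⊕ β :=
  .ofMapLEIff Sum.inl fun _ _ => Sum.inl_le_inl_iff

def OrderEmbedding.sumInr : β ↪o α ⊕ β :=
  .ofMapLEIff Sum.inr fun _ _ => Sum.inr_le_inr_iff

def OrderEmbedding.sumLexInl : α ↪o α ⊕ₗ β :=
  .ofMapLEIff (toLex ∘ Sum.inl) fun _ _ => Sum.Lex.inl_le_inl_iff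

theorem VFree.sum (hα : VFree α) (hβ : VFree β) : VFree (α ⊕ β) := by
  rw [vFree_iff] at hα hβ ⊢
  rintro (p | p) (q | q) (r | r) hq hr
  all_goals simp only [Sum.inl_le_inl_iff, Sum.inr_le_inr_iff, Sum.not_inl_le_inr,
    Sum.not_inr_le_inl] at hq hr ⊢
  exacts [hα hq hr, hβ hq hr]

variable [Fintype α] [Fintype β]

theorem ao_sum_le : ao (α ⊕ β) ≤ ao α + ao β := by
  obtain ⟨U, hU, hcard⟩ := exists_ao (α ⊕ β)
  rw [← hcard, ← card_toLeft_add_card_toRight]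
  exact add_le_add (card_le_ao (hU.comap .sumInl fun _ => mem_toLeft.1))
    (card_le_ao (hU.comap .sumInr fun _ => mem_toRight.1))

theorem heightP_sum_le : heightP (α ⊕ β) ≤ max (heightP α) (heightP β) := by
  obtain ⟨C, hC, hcard⟩ := exists_heightP (α ⊕ β)
  rw [← hcard, ← card_toLeft_add_card_toRight]
  have hL := card_le_heightP (hC.comap .sumInl fun _ => mem_toLeft.1)
  have hR := card_le_heightP (hC.comap .sumInr fun _ => mem_toRight.1)
  rcases C.toLeft.eq_empty_or_nonempty with hC' | ⟨a, ha⟩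
  · rw [hC', card_empty, zero_add]
    exact le_max_of_le_right hR
  · have hC' : C.toRight = ∅ := by
      refine eq_empty_of_forall_notMem fun b hb => ?_
      rcases hC.total (mem_coe.2 (mem_toLeft.1 ha)) (mem_coe.2 (mem_toRight.1 hb)) with h | h
      exacts [Sum.not_inl_le_inr h, Sum.not_inr_le_inl h]
    rw [hC', card_empty, add_zero]
    exact le_max_of_le_left hL

theorem ao_sumLex_le : ao (α ⊕ₗ β) ≤ max (ao α) (heightP α + Fintype.card β) := by
  obtain ⟨U, hU, hcard⟩ := exists_ao (α ⊕ₗ β)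
  set V := U.map ofLex.toEmbedding
  have hL : ∀ a ∈ V.toLeft, toLex (Sum.inl a) ∈ U := fun a ha => by
    simpa [V, mem_map_equiv] using ha
  rw [← hcard, ← card_map ofLex.toEmbedding, ← card_toLeft_add_card_toRight]
  rcases V.toRight.eq_empty_or_nonempty with hR | ⟨b, hb⟩
  · rw [hR, card_empty, add_zero]
    exact le_max_of_le_left (card_le_ao (hU.comap .sumLexInl hL))
  · -- every element of the lower summand lies below `b`, so within `U` they form a chain
    have hb : toLex (Sum.inr b) ∈ U := by simpa [V, mem_map_equiv] using hb
    have hchain : IsChain (· ≤ ·) (V.toLeft : Set α) := fun x hx y hy _ => by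
      simpa [OrderEmbedding.sumLexInl] using hU _ (hL x hx) _ hb _ (hL y hy)
        (Or.inl (Sum.Lex.inl_le_inr _ _)) (Or.inr (Sum.Lex.inl_le_inr _ _))
    exact le_max_of_le_right (add_le_add (card_le_heightP hchain) (card_le_univ _))

end Sum

section SumLex

variable {α β : Type*} [PartialOrder α] [LinearOrder β]

theorem VFree.sumLex (hα : VFree α) : VFree (α ⊕ₗ β) := by
  rw [vFree_iff] at hα ⊢
  intro p q r hq hr
  induction q using Lex.rec with | _ q => ?_
  induction r using Lex.rec with | _ r => ?_
  rcases q with q | q <;> rcases r with r | r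
  · induction p using Lex.rec with | _ p => ?_
    rcases p with p | p
    · simpa only [Sum.Lex.inl_le_inl_iff] using
        hα (Sum.Lex.inl_le_inl_iff.1 hq) (Sum.Lex.inl_le_inl_iff.1 hr)
    · exact absurd hq Sum.Lex.not_inr_le_inl
  · exact Or.inl (Sum.Lex.inl_le_inr q r)
  · exact Or.inr (Sum.Lex.inl_le_inr r q)
  · simpa only [Sum.Lex.inr_le_inr_iff] using le_total q r

theorem heightP_add_card_le_heightP_sumLex [Fintype α] [Fintype β] :
    heightP α + Fintype.card β ≤ heightP (α ⊕ₗ β) := by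
  obtain ⟨C, hC, hcard⟩ := exists_heightP α
  let D : Finset (α ⊕ₗ β) := (C.disjSum univ).map toLex.toEmbedding
  have hD : IsChain (· ≤ ·) (D : Set (α ⊕ₗ β)) := by
    rintro _ hx _ hy -
    simp only [D, coe_map, Set.mem_image, mem_coe, Equiv.coe_toEmbedding] at hx hy
    obtain ⟨x, hx, rfl⟩ := hx
    obtain ⟨y, hy, rfl⟩ := hy
    rcases x with a | b <;> rcases y with a' | b'
    · simpa only [Sum.Lex.inl_le_inl_iff] using
        hC.total (mem_coe.2 (inl_mem_disjSum.1 hx)) (mem_coe.2 (inl_mem_disjSum.1 hy))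
    · exact Or.inl (Sum.Lex.inl_le_inr a b')
    · exact Or.inr (Sum.Lex.inl_le_inr a' b)
    · simpa only [Sum.Lex.inr_le_inr_iff] using le_total b b'
  simpa [D, hcard] using card_le_heightP hD

end SumLex

def ExtremalPoset : ℕ → Type
  | 0 => PUnit
  | k + 1 => (ExtremalPoset k ⊕ ExtremalPoset k) ⊕ₗ Fin (2 ^ k)

namespace ExtremalPoset

instance instPartialOrder : (k : ℕ) → PartialOrder (ExtremalPoset k)
  | 0 => inferInstanceAs (PartialOrder PUnit)
  | k + 1 =>
    letI := instPartialOrder k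
    inferInstanceAs (PartialOrder ((ExtremalPoset k ⊕ ExtremalPoset k) ⊕ₗ Fin (2 ^ k)))

instance instFintype : (k : ℕ) → Fintype (ExtremalPoset k)
  | 0 => inferInstanceAs (Fintype PUnit)
  | k + 1 =>
    letI := instFintype k
    inferInstanceAs (Fintype ((ExtremalPoset k ⊕ ExtremalPoset k) ⊕ₗ Fin (2 ^ k)))

theorem card_succ (k : ℕ) :
    Fintype.card (ExtremalPoset (k + 1)) = 2 * Fintype.card (ExtremalPoset k) + 2 ^ k := by
  calc Fintype.card (ExtremalPoset (k + 1))
      = Fintype.card ((ExtremalPoset k ⊕ ExtremalPoset k) ⊕ Fin (2 ^ k)) :=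
        Fintype.card_congr ofLex
    _ = 2 * Fintype.card (ExtremalPoset k) + 2 ^ k := by
      rw [Fintype.card_sum, Fintype.card_sum, Fintype.card_fin, two_mul]

theorem card_succ_eq (k : ℕ) : Fintype.card (ExtremalPoset (k + 1)) = 2 ^ k * (k + 3) := by
  induction k with
  | zero => rw [card_succ]; rfl
  | succ k ih => rw [card_succ, ih, pow_succ]; ring

theorem vFree : ∀ k, VFree (ExtremalPoset k)
  | 0 => fun ⟨_, _, _, hq, _, _⟩ => hq.ne rfl
  | k + 1 => ((vFree k).sum (vFree k)).sumLex

theorem ao_le : ∀ k, ao (ExtremalPoset k) ≤ 2 ^ k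
  | 0 => ao_le_card
  | k + 1 => by
    have hao := ao_le k
    have hheight := heightP_le_ao.trans hao
    calc ao ((ExtremalPoset k ⊕ ExtremalPoset k) ⊕ₗ Fin (2 ^ k))
        ≤ max (ao (ExtremalPoset k ⊕ ExtremalPoset k))
            (heightP (ExtremalPoset k ⊕ ExtremalPoset k) + Fintype.card (Fin (2 ^ k))) :=
          ao_sumLex_le
      _ ≤ max (2 ^ k + 2 ^ k) (max (2 ^ k) (2 ^ k) + 2 ^ k) := by
          rw [Fintype.card_fin]
          gcongr
          exacts [ao_sum_le.trans (add_le_add hao hao),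
            heightP_sum_le.trans (max_le_max hheight hheight)]
      _ = 2 ^ (k + 1) := by rw [max_self, max_self, pow_succ, mul_two]

theorem le_heightP : ∀ k, 2 ^ k ≤ heightP (ExtremalPoset k)
  | 0 => card_le_heightP (α := ExtremalPoset 0) (C := univ) fun _ _ _ _ hxy => (hxy rfl).elim
  | k + 1 =>
    calc 2 ^ (k + 1) = 2 ^ k + Fintype.card (Fin (2 ^ k)) := by
          rw [Fintype.card_fin, pow_succ, mul_two]
      _ ≤ heightP (ExtremalPoset k ⊕ ExtremalPoset k) + Fintype.card (Fin (2 ^ k)) := by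
          gcongr
          exact (le_heightP k).trans (heightP_le_of_orderEmbedding .sumInl)
      _ ≤ heightP ((ExtremalPoset k ⊕ ExtremalPoset k) ⊕ₗ Fin (2 ^ k)) :=
          heightP_add_card_le_heightP_sumLex

theorem ao_eq (k : ℕ) : ao (ExtremalPoset k) = 2 ^ k :=
  (ao_le k).antisymm ((le_heightP k).trans heightP_le_ao)

theorem heightP_eq (k : ℕ) : heightP (ExtremalPoset k) = 2 ^ k :=
  (heightP_le_ao.trans (ao_le k)).antisymm (le_heightP k)

end ExtremalPoset

theorem VFree.card_le_of_ao_eq_two_pow {α : Type*} [Fintype α] [PartialOrder α] (hV : VFree α)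
    {k : ℕ} (hao : ao α = 2 ^ (k + 1)) (hheight : heightP α ≤ 2 ^ (k + 1)) :
    Fintype.card α ≤ 2 ^ k * (k + 3) := by
  have hcard := hV.card_le_heightP_add_phi_ao
  have hheight' : (heightP α : ℝ) ≤ 2 ^ (k + 1) := by exact_mod_cast hheight
  rw [hao, phi_two_pow] at hcard
  have : (Fintype.card α : ℝ) ≤ 2 ^ k * (k + 3) := by
    push_cast at hcard
    rw [pow_succ] at hcard hheight'
    linarith
  exact_mod_cast this

/-- for `k ≥ 1`, `Λ(2^k) = 2^{k−1} · (k + 2)`. -/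
theorem Lambda_pow_two (k : ℕ) (hk : 1 ≤ k) :
    Lambda (2 ^ k) = 2 ^ (k - 1) * (k + 2) := by
  obtain ⟨k, rfl⟩ := Nat.exists_eq_add_of_le' hk
  rw [Nat.add_sub_cancel, add_assoc]
  refine IsGreatest.csSup_eq ⟨?_, ?_⟩
  · obtain ⟨P, hV, hao, hheight⟩ :=
      (ExtremalPoset.vFree (k + 1)).exists_partialOrder_fin (ExtremalPoset.card_succ_eq k)
    exact ⟨P, hV, hao.trans (ExtremalPoset.ao_eq _),
      (hheight.trans (ExtremalPoset.heightP_eq _)).le⟩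
  · rintro n ⟨P, hV, hao, hheight⟩
    simpa using @VFree.card_le_of_ao_eq_two_pow (Fin n) _ P hV k hao hheight
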